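/- arXiv:1912.07048 — 5 statements merged into one kernel-verified Lean document; each statement's English description precedes it below -/
import Mathlib

section
/- Let (X, μ) be a σ-finite measure space, N a positive integer, w ∈ Δ_N a probability vector, and f : X × {1,...,N} → ℝ_{>0} measurable in x for each n. Let u : X → ℝ_{≥0} be measurable with ∫_X u dμ = 1. Then ∑_{n=1}^N w_n · exp(∫_X log f(x,n) · u(x) dμ(x)) ≤ exp(∫_X log(∑_{n=1}^N w_n · f(x,n)) · u(x) dμ(x)). -/
open MeasureTheory Real Finset

/-!
Put `S = ∑ n, w n * f n` and let `ν` be the probability measure with density `u` against `μ`.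
Jensen's inequality for `exp` applied to `log (f n / S)` gives
`exp (∫ log f n dν - ∫ log S dν) ≤ ∫ f n / S dν`. Multiplying by `w n` and summing, the
right-hand sides add up to `∫ S / S dν = 1`.
-/

lemma sum_mul_pos_of_sum_pos {ι : Type*} {s : Finset ι} {w f : ι → ℝ}
    (hw_nonneg : ∀ i ∈ s, 0 ≤ w i) (hw_pos : 0 < ∑ i ∈ s, w i) (hf_pos : ∀ i ∈ s, 0 < f i) :
    0 < ∑ i ∈ s, w i * f i := by
  obtain ⟨i, hi, hwi⟩ := exists_lt_of_sum_lt (f := fun _ => (0 : ℝ)) (by simpa using hw_pos)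
  exact sum_pos' (fun j hj => mul_nonneg (hw_nonneg j hj) (hf_pos j hj).le)
    ⟨i, hi, mul_pos hwi (hf_pos i hi)⟩

lemma mul_div_sum_mul_le_one {ι : Type*} {s : Finset ι} {w f : ι → ℝ}
    (hwf_nonneg : ∀ i ∈ s, 0 ≤ w i * f i) {i : ι} (hi : i ∈ s) :
    w i * f i / ∑ j ∈ s, w j * f j ≤ 1 :=
  div_le_one_of_le₀ (single_le_sum hwf_nonneg hi) (sum_nonneg hwf_nonneg)

section WeightedJensen

variable {X : Type*} [MeasurableSpace X] {μ : Measure X} {u : X → ℝ}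

lemma isProbabilityMeasure_withDensity_ofReal (hu_nonneg : 0 ≤ᵐ[μ] u)
    (hu_int : ∫ x, u x ∂μ = 1) :
    IsProbabilityMeasure (μ.withDensity fun x => ENNReal.ofReal (u x)) := by
  constructor
  rw [withDensity_apply _ MeasurableSet.univ, setLIntegral_univ,
    ← ofReal_integral_eq_lintegral_ofReal (integrable_of_integral_eq_one hu_int) hu_nonneg,
    hu_int, ENNReal.ofReal_one]

lemma toReal_ofReal_smul_ae_eq (hu_nonneg : 0 ≤ᵐ[μ] u) (g : X → ℝ) :
    (fun x => (ENNReal.ofReal (u x)).toReal • g x) =ᵐ[μ] fun x => g x * u x := by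
  filter_upwards [hu_nonneg] with x hx
  rw [ENNReal.toReal_ofReal hx, smul_eq_mul, mul_comm]

lemma integral_withDensity_ofReal (hu_meas : Measurable u) (hu_nonneg : 0 ≤ᵐ[μ] u)
    (g : X → ℝ) :
    ∫ x, g x ∂μ.withDensity (fun x => ENNReal.ofReal (u x)) = ∫ x, g x * u x ∂μ := by
  rw [integral_withDensity_eq_integral_toReal_smul hu_meas.ennreal_ofReal
    (ae_of_all _ fun _ => ENNReal.ofReal_lt_top)]
  exact integral_congr_ae (toReal_ofReal_smul_ae_eq hu_nonneg g)

lemma integrable_withDensity_ofReal_iff (hu_meas : Measurable u) (hu_nonneg : 0 ≤ᵐ[μ] u)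
    {g : X → ℝ} :
    Integrable g (μ.withDensity fun x => ENNReal.ofReal (u x)) ↔
      Integrable (fun x => g x * u x) μ := by
  rw [integrable_withDensity_iff_integrable_smul' hu_meas.ennreal_ofReal
    (ae_of_all _ fun _ => ENNReal.ofReal_lt_top)]
  exact integrable_congr (toReal_ofReal_smul_ae_eq hu_nonneg g)

theorem exp_integral_mul_le_integral_exp_mul (hu_meas : Measurable u) (hu_nonneg : 0 ≤ᵐ[μ] u)
    (hu_int : ∫ x, u x ∂μ = 1) {g : X → ℝ} (hg : Integrable (fun x => g x * u x) μ)
    (hexp : Integrable (fun x => exp (g x) * u x) μ) :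
    exp (∫ x, g x * u x ∂μ) ≤ ∫ x, exp (g x) * u x ∂μ := by
  have := isProbabilityMeasure_withDensity_ofReal hu_nonneg hu_int
  rw [← integral_withDensity_ofReal hu_meas hu_nonneg,
    ← integral_withDensity_ofReal hu_meas hu_nonneg]
  exact convexOn_exp.map_integral_le continuous_exp.continuousOn isClosed_univ
    (ae_of_all _ fun _ => Set.mem_univ _)
    ((integrable_withDensity_ofReal_iff hu_meas hu_nonneg).2 hg)
    ((integrable_withDensity_ofReal_iff hu_meas hu_nonneg).2 hexp)

theorem exp_sub_integral_log_mul_le_integral_div_mul (hu_meas : Measurable u)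
    (hu_nonneg : 0 ≤ᵐ[μ] u) (hu_int : ∫ x, u x ∂μ = 1) {g h : X → ℝ}
    (hg_pos : ∀ x, 0 < g x) (hh_pos : ∀ x, 0 < h x)
    (hg_log : Integrable (fun x => log (g x) * u x) μ)
    (hh_log : Integrable (fun x => log (h x) * u x) μ)
    (hdiv : Integrable (fun x => g x / h x * u x) μ) :
    exp ((∫ x, log (g x) * u x ∂μ) - ∫ x, log (h x) * u x ∂μ) ≤
      ∫ x, g x / h x * u x ∂μ := by
  have hlog_div : (fun x => log (g x / h x) * u x) =
      fun x => log (g x) * u x - log (h x) * u x := funext fun x => by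
    rw [log_div (hg_pos x).ne' (hh_pos x).ne', sub_mul]
  have hexp_log : ∀ x, exp (log (g x / h x)) = g x / h x :=
    fun x => exp_log (div_pos (hg_pos x) (hh_pos x))
  rw [← integral_sub hg_log hh_log, ← hlog_div]
  calc exp (∫ x, log (g x / h x) * u x ∂μ)
      ≤ ∫ x, exp (log (g x / h x)) * u x ∂μ :=
        exp_integral_mul_le_integral_exp_mul hu_meas hu_nonneg hu_int
          (hlog_div ▸ hg_log.sub hh_log) (by simpa only [hexp_log] using hdiv)
    _ = ∫ x, g x / h x * u x ∂μ := by simp only [hexp_log]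

theorem mul_exp_sub_integral_log_mul_le_integral_mul_div_mul (hu_meas : Measurable u)
    (hu_nonneg : 0 ≤ᵐ[μ] u) (hu_int : ∫ x, u x ∂μ = 1) {g h : X → ℝ} {c : ℝ} (hc : 0 ≤ c)
    (hg_pos : ∀ x, 0 < g x) (hh_pos : ∀ x, 0 < h x)
    (hg_log : Integrable (fun x => log (g x) * u x) μ)
    (hh_log : Integrable (fun x => log (h x) * u x) μ)
    (hdiv : Integrable (fun x => c * g x / h x * u x) μ) :
    c * exp ((∫ x, log (g x) * u x ∂μ) - ∫ x, log (h x) * u x ∂μ) ≤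
      ∫ x, c * g x / h x * u x ∂μ := by
  rcases hc.eq_or_lt with rfl | hc
  · simp
  simp only [mul_div_assoc, mul_assoc, integral_const_mul] at hdiv ⊢
  gcongr
  refine exp_sub_integral_log_mul_le_integral_div_mul hu_meas hu_nonneg hu_int hg_pos hh_pos
    hg_log hh_log ?_
  simpa only [inv_mul_cancel_left₀ hc.ne'] using hdiv.const_mul c⁻¹

end WeightedJensen

theorem generalized_holder_inequality_general
    {X : Type*} [MeasurableSpace X] (μ : Measure X)
    (N : ℕ)
    (w : Fin N → ℝ) (hw_nonneg : ∀ n, 0 ≤ w n) (hw_sum : ∑ n, w n = 1)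
    (f : X → Fin N → ℝ) (hf_pos : ∀ x n, 0 < f x n)
    (hf_meas : ∀ n, Measurable fun x => f x n)
    (u : X → ℝ) (hu_nonneg : ∀ x, 0 ≤ u x) (hu_meas : Measurable u)
    (hu_int : ∫ x, u x ∂μ = 1)
    (hint : ∀ n, Integrable (fun x => Real.log (f x n) * u x) μ)
    (hint_sum : Integrable (fun x => Real.log (∑ n, w n * f x n) * u x) μ) :
    ∑ n, w n * Real.exp (∫ x, Real.log (f x n) * u x ∂μ) ≤
      Real.exp (∫ x, Real.log (∑ n, w n * f x n) * u x ∂μ) := by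
  set S : X → ℝ := fun x => ∑ n, w n * f x n
  have hS_pos : ∀ x, 0 < S x := fun x =>
    sum_mul_pos_of_sum_pos (fun n _ => hw_nonneg n) (hw_sum ▸ one_pos) (fun n _ => hf_pos x n)
  have hwf_nonneg : ∀ x n, 0 ≤ w n * f x n := fun x n => mul_nonneg (hw_nonneg n) (hf_pos x n).le
  have hshare_int : ∀ n, Integrable (fun x => w n * f x n / S x * u x) μ := fun n =>
    (integrable_of_integral_eq_one hu_int).bdd_mul
      (((hf_meas n).const_mul (w n)).div
        (Finset.measurable_sum _ fun m _ => (hf_meas m).const_mul (w m))).aestronglyMeasurable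
      (ae_of_all _ fun x => by
        rw [norm_of_nonneg (div_nonneg (hwf_nonneg x n) (hS_pos x).le)]
        exact mul_div_sum_mul_le_one (fun m _ => hwf_nonneg x m) (mem_univ n))
  have hshares_sum : ∑ n, ∫ x, w n * f x n / S x * u x ∂μ = 1 := by
    rw [← integral_finsetSum _ fun n _ => hshare_int n, ← hu_int]
    refine integral_congr_ae (ae_of_all _ fun x => ?_)
    simp only [← sum_mul, ← sum_div]
    rw [div_self (hS_pos x).ne', one_mul]
  calc ∑ n, w n * exp (∫ x, log (f x n) * u x ∂μ)
      = (∑ n, w n * exp ((∫ x, log (f x n) * u x ∂μ) - ∫ x, log (S x) * u x ∂μ)) *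
          exp (∫ x, log (S x) * u x ∂μ) := by
        simp only [sum_mul, mul_assoc, ← exp_add, sub_add_cancel]
    _ ≤ (∑ n, ∫ x, w n * f x n / S x * u x ∂μ) * exp (∫ x, log (S x) * u x ∂μ) := by
        gcongr with n
        exact mul_exp_sub_integral_log_mul_le_integral_mul_div_mul hu_meas
          (ae_of_all _ hu_nonneg) hu_int (hw_nonneg n) (hf_pos · n) hS_pos (hint n) hint_sum
          (hshare_int n)
    _ = exp (∫ x, log (S x) * u x ∂μ) := by rw [hshares_sum, one_mul]

/-- Generalized (continuous-form) Hölder inequality: the weighted geometric-mean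
integral of a sum dominates the sum of weighted geometric means. -/
theorem generalized_holder_inequality
    {X : Type*} [MeasurableSpace X] (μ : Measure X) [SigmaFinite μ]
    (N : ℕ) (hN : 0 < N)
    (w : Fin N → ℝ) (hw_nonneg : ∀ n, 0 ≤ w n) (hw_sum : ∑ n, w n = 1)
    (f : X → Fin N → ℝ) (hf_pos : ∀ x n, 0 < f x n)
    (hf_meas : ∀ n, Measurable fun x => f x n)
    (u : X → ℝ) (hu_nonneg : ∀ x, 0 ≤ u x) (hu_meas : Measurable u)
    (hu_int : ∫ x, u x ∂μ = 1)
    (hint : ∀ n, Integrable (fun x => Real.log (f x n) * u x) μ)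
    (hint_sum : Integrable (fun x => Real.log (∑ n, w n * f x n) * u x) μ) :
    ∑ n, w n * Real.exp (∫ x, Real.log (f x n) * u x ∂μ) ≤
      Real.exp (∫ x, Real.log (∑ n, w n * f x n) * u x ∂μ) :=
  generalized_holder_inequality_general μ N w hw_nonneg hw_sum f hf_pos hf_meas u hu_nonneg hu_meas
    hu_int hint hint_sum
end

section
/- Let λ : Γ × Ω → ℝ_{≥0} be a loss function and η > 0. Suppose λ is η-mixable with substitution function Σ_λ, i.e., for every N, every probability vector w ∈ Δ_N and forecasts γ¹,...,γᴺ ∈ Γ, the element γ̄ = Σ_λ(γ¹,...,γᴺ; w) satisfies exp(−η λ(γ̄, ω)) ≥ ∑_n w_n exp(−η λ(γⁿ, ω)) for all ω ∈ Ω. Let (X, σ_X) be a measurable space, μ_ω an ω-dependent measure on X and u_ω a nonnegative measurable weight with ∫_X u_ω dμ_ω = 1 for each ω. Define the integral loss λ_{u,μ}(γ, ω) = ∫_X λ(γ(x), ω(x)) u_ω(x) dμ_ω(x) on measurable functions γ : X → Γ, ω : X → Ω. Then λ_{u,μ} is η-mixable, with aggregated forecast given by the pointwise substitution γ̄(x)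 = Σ_λ(γ¹(x),...,γᴺ(x); w). -/
/-!
Tilt the weights by the integrated losses `Iₙ = ∫ fₙ u`: with `D = ∑ₙ wₙ exp(-η Iₙ)` and `tₙ = wₙ exp(-η Iₙ) / D`,
Jensen's inequality for `exp` gives, at every point `x`,
`∑ₙ tₙ (-η fₙ(x) + log D + η Iₙ) ≤ log ∑ₙ wₙ exp(-η fₙ(x)) ≤ -η g(x)`.
The left side is affine in the `fₙ`, so integrating it against the probability density `u`
turns it into `log D`, and the right side into `-η ∫ g u`.
-/

open MeasureTheory Real Finset

theorem exp_sum_mul_add_le_sum_mul_exp {ι : Type*} [Fintype ι] {t w b : ι → ℝ}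
    (ht : ∀ i, 0 ≤ t i) (ht_sum : ∑ i, t i = 1) (htw : ∀ i, t i * exp (b i) ≤ w i)
    (a : ι → ℝ) :
    exp (∑ i, t i * (a i + b i)) ≤ ∑ i, w i * exp (a i) :=
  calc exp (∑ i, t i * (a i + b i))
      ≤ ∑ i, t i * exp (a i + b i) :=
        convexOn_exp.map_sum_le (fun i _ => ht i) ht_sum (fun _ _ => Set.mem_univ _)
    _ = ∑ i, t i * exp (b i) * exp (a i) := by
        simp only [exp_add, mul_comm (exp (a _)), mul_assoc]
    _ ≤ ∑ i, w i * exp (a i) :=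
        sum_le_sum fun i _ => mul_le_mul_of_nonneg_right (htw i) (exp_pos _).le

theorem exists_gibbs_weights {ι : Type*} [Fintype ι] {w : ι → ℝ} (hw : ∀ i, 0 ≤ w i)
    (a : ι → ℝ) (hD : 0 < ∑ i, w i * exp (a i)) :
    ∃ t b : ι → ℝ, (∀ i, 0 ≤ t i) ∧ ∑ i, t i = 1 ∧ (∀ i, t i * exp (b i) = w i) ∧
      ∑ i, t i * (a i + b i) = log (∑ i, w i * exp (a i)) := by
  set D := ∑ i, w i * exp (a i) with hD_def
  refine ⟨fun i => w i * exp (a i) / D, fun i => log D - a i,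
    fun i => div_nonneg (mul_nonneg (hw i) (exp_pos _).le) hD.le,
    by rw [← sum_div, div_self hD.ne'], fun i => ?_, ?_⟩
  · rw [exp_sub, exp_log hD]
    field_simp
  · simp only [add_sub_cancel]
    rw [← sum_mul, ← sum_div, ← hD_def, div_self hD.ne', one_mul]

section WeightedIntegral

variable {X : Type*} [MeasurableSpace X] {ν : Measure X} {u : X → ℝ}

theorem integrable_affine_mul (hu : ∫ x, u x ∂ν = 1) {f : X → ℝ}
    (hf : Integrable (fun x => f x * u x) ν) (c b : ℝ) :
    Integrable (fun x => (c * f x + b) * u x) ν := by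
  have hu_int : Integrable u ν := .of_integral_ne_zero (by rw [hu]; exact one_ne_zero)
  exact ((hf.const_mul c).add (hu_int.const_mul b)).congr
    (ae_of_all _ fun x => by simp only [Pi.add_apply]; ring)

theorem integral_affine_mul (hu : ∫ x, u x ∂ν = 1) {f : X → ℝ}
    (hf : Integrable (fun x => f x * u x) ν) (c b : ℝ) :
    ∫ x, (c * f x + b) * u x ∂ν = c * ∫ x, f x * u x ∂ν + b := by
  have hu_int : Integrable u ν := .of_integral_ne_zero (by rw [hu]; exact one_ne_zero)
  simp only [add_mul, mul_assoc]
  rw [integral_add (hf.const_mul c) (hu_int.const_mul b), integral_const_mul, integral_const_mul,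
    hu, mul_one]

theorem sum_mul_exp_integral_le_of_forall {ι : Type*} [Fintype ι] (hu_nonneg : ∀ x, 0 ≤ u x)
    (hu : ∫ x, u x ∂ν = 1) {w : ι → ℝ} (hw : ∀ i, 0 ≤ w i) (η : ℝ)
    {f : ι → X → ℝ} (hf : ∀ i, Integrable (fun x => f i x * u x) ν)
    {g : X → ℝ} (hg : Integrable (fun x => g x * u x) ν)
    (hfg : ∀ x, ∑ i, w i * exp (-η * f i x) ≤ exp (-η * g x)) :
    ∑ i, w i * exp (-η * ∫ x, f i x * u x ∂ν) ≤ exp (-η * ∫ x, g x * u x ∂ν) := by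
  rcases (sum_nonneg fun i _ =>
    mul_nonneg (hw i) (exp_pos (-η * ∫ x, f i x * u x ∂ν)).le).eq_or_lt with hD | hD
  · rw [← hD]
    exact (exp_pos _).le
  obtain ⟨t, b, ht, ht_sum, htw, hlog⟩ := exists_gibbs_weights hw _ hD
  have hpoint : ∀ x, ∑ i, t i * (-η * f i x + b i) ≤ -η * g x := fun x =>
    exp_le_exp.mp ((exp_sum_mul_add_le_sum_mul_exp ht ht_sum (fun i => (htw i).le) _).trans
      (hfg x))
  have hterm : ∀ i, Integrable (fun x => t i * ((-η * f i x + b i) * u x)) ν :=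
    fun i => (integrable_affine_mul hu (hf i) _ _).const_mul _
  have hmono : ∫ x, ∑ i, t i * ((-η * f i x + b i) * u x) ∂ν ≤ ∫ x, -η * (g x * u x) ∂ν := by
    refine integral_mono (integrable_finsetSum _ fun i _ => hterm i) (hg.const_mul _) fun x => ?_
    simpa only [sum_mul, mul_assoc] using mul_le_mul_of_nonneg_right (hpoint x) (hu_nonneg x)
  rw [integral_finsetSum _ fun i _ => hterm i, integral_const_mul] at hmono
  simp only [integral_const_mul, integral_affine_mul hu (hf _)] at hmono
  rw [hlog] at hmono
  exact (log_le_iff_le_exp hD).mp hmono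

end WeightedIntegral

theorem integral_mixability_general
    {Γ Ω X : Type*} [MeasurableSpace X]
    (lam : Γ → Ω → ℝ)
    (η : ℝ)
    (Sub : (N : ℕ) → (Fin N → Γ) → (Fin N → ℝ) → Γ)
    (hmix : ∀ (N : ℕ) (w : Fin N → ℝ), (∀ n, 0 ≤ w n) → (∑ n, w n = 1) →
      ∀ (γ : Fin N → Γ) (o : Ω),
        ∑ n, w n * Real.exp (-η * lam (γ n) o) ≤ Real.exp (-η * lam (Sub N γ w) o))
    -- ω-dependent measure and weight
    (μ : (X → Ω) → Measure X) (u : (X → Ω) → X → ℝ)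
    (hu_nonneg : ∀ ω x, 0 ≤ u ω x)
    (hu_int : ∀ ω, ∫ x, u ω x ∂(μ ω) = 1)
    -- the game data
    (N : ℕ) (w : Fin N → ℝ) (hw_nonneg : ∀ n, 0 ≤ w n) (hw_sum : ∑ n, w n = 1)
    (γ : Fin N → X → Γ)
    (ω : X → Ω)
    (hint : ∀ n, Integrable (fun x => lam (γ n x) (ω x) * u ω x) (μ ω))
    (hint_agg : Integrable
      (fun x => lam (Sub N (fun n => γ n x) w) (ω x) * u ω x) (μ ω)) :
    ∑ n, w n * Real.exp (-η * ∫ x, lam (γ n x) (ω x) * u ω x ∂(μ ω)) ≤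
      Real.exp (-η * ∫ x, lam (Sub N (fun n => γ n x) w) (ω x) * u ω x ∂(μ ω)) :=
  sum_mul_exp_integral_le_of_forall (hu_nonneg ω) (hu_int ω) hw_nonneg η hint hint_agg
    fun x => hmix N w hw_nonneg hw_sum (fun n => γ n x) (ω x)

/-- Integral mixability: if `lam` is `η`-mixable with substitution function `Sub`,
then the integral loss `λ_{u,μ}` is `η`-mixable, with pointwise substitution
as aggregation rule. -/
theorem integral_mixability
    {Γ Ω X : Type*} [MeasurableSpace Γ] [MeasurableSpace Ω] [MeasurableSpace X]
    (lam : Γ → Ω → ℝ) (hlam_nonneg : ∀ g o, 0 ≤ lam g o)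
    (hlam_meas : Measurable fun p : Γ × Ω => lam p.1 p.2)
    (η : ℝ) (hη : 0 < η)
    (Sub : (N : ℕ) → (Fin N → Γ) → (Fin N → ℝ) → Γ)
    (hSub_meas : ∀ (N : ℕ) (w : Fin N → ℝ),
      Measurable fun g : Fin N → Γ => Sub N g w)
    (hmix : ∀ (N : ℕ) (w : Fin N → ℝ), (∀ n, 0 ≤ w n) → (∑ n, w n = 1) →
      ∀ (γ : Fin N → Γ) (o : Ω),
        ∑ n, w n * Real.exp (-η * lam (γ n) o) ≤ Real.exp (-η * lam (Sub N γ w) o))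
    -- ω-dependent measure and weight
    (μ : (X → Ω) → Measure X) (u : (X → Ω) → X → ℝ)
    (hu_nonneg : ∀ ω x, 0 ≤ u ω x)
    (hu_meas : ∀ ω, Measurable (u ω))
    (hu_int : ∀ ω, ∫ x, u ω x ∂(μ ω) = 1)
    -- the game data
    (N : ℕ) (w : Fin N → ℝ) (hw_nonneg : ∀ n, 0 ≤ w n) (hw_sum : ∑ n, w n = 1)
    (γ : Fin N → X → Γ) (hγ_meas : ∀ n, Measurable (γ n))
    (ω : X → Ω) (hω_meas : Measurable ω)
    (hint : ∀ n, Integrable (fun x => lam (γ n x) (ω x) * u ω x) (μ ω))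
    (hint_agg : Integrable
      (fun x => lam (Sub N (fun n => γ n x) w) (ω x) * u ω x) (μ ω)) :
    ∑ n, w n * Real.exp (-η * ∫ x, lam (γ n x) (ω x) * u ω x ∂(μ ω)) ≤
      Real.exp (-η * ∫ x, lam (Sub N (fun n => γ n x) w) (ω x) * u ω x ∂(μ ω)) :=
  integral_mixability_general lam η Sub hmix μ u hu_nonneg hu_int N w hw_nonneg hw_sum γ ω hint
    hint_agg
end

section
/- For one-dimensional Borel probability measures γ and ω on ℝ with finite first moments, the energy distance 2·E_{x∼γ, y∼ω}|x − y| − E_{x,x'∼γ}|x − x'| − E_{y,y'∼ω}|y − y'| equals 2·∫_{−∞}^{∞} (F_γ(t) − F_ω(t))² dt, where F_γ, F_ω are the cumulative distribution functions of γ and ω. -/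
/-!
`|x - y|` is the Lebesgue measure of the set of `t` separating `x` and `y`, so by Tonelli
`E|X - Y| = ∫ P(X ≤ t < Y) + P(Y ≤ t < X) dt = ∫ F(t) (1 - G(t)) + (1 - F(t)) G(t) dt`
for independent `X ∼ F`, `Y ∼ G`. Inserting this into the three terms of the energy distance,
the integrand becomes `2 (F + G - 2 F G) - (2 F - 2 F²) - (2 G - 2 G²) = 2 (F - G)²`.
-/

open MeasureTheory Set

namespace EnergyDistance

lemma measurableSet_mem_Ico_min_max :
    MeasurableSet {q : (ℝ × ℝ) × ℝ | q.2 ∈ Ico (q.1.1 ⊓ q.1.2) (q.1.1 ⊔ q.1.2)} :=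
  (measurableSet_le (by fun_prop) measurable_snd).inter
    (measurableSet_lt measurable_snd (by fun_prop))

lemma setOf_mem_Ico_min_max (t : ℝ) :
    {p : ℝ × ℝ | t ∈ Ico (p.1 ⊓ p.2) (p.1 ⊔ p.2)} = Iic t ×ˢ Ioi t ∪ Ioi t ×ˢ Iic t := by
  ext ⟨x, y⟩
  simp only [mem_ofPred_eq, mem_Ico, inf_le_iff, lt_sup_iff, mem_union, mem_prod, mem_Iic,
    mem_Ioi]
  grind

theorem lintegral_ofReal_abs_sub_prod (μ ν : Measure ℝ) [SFinite μ] [SFinite ν] :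
    ∫⁻ p, ENNReal.ofReal |p.1 - p.2| ∂μ.prod ν =
      ∫⁻ t, μ (Iic t) * ν (Ioi t) + μ (Ioi t) * ν (Iic t) := by
  calc ∫⁻ p, ENNReal.ofReal |p.1 - p.2| ∂μ.prod ν
      = ∫⁻ p, volume (Ico (p.1 ⊓ p.2) (p.1 ⊔ p.2)) ∂μ.prod ν := by
        simp only [Real.volume_Ico, max_sub_min_eq_abs']
    _ = (μ.prod ν).prod volume {q | q.2 ∈ Ico (q.1.1 ⊓ q.1.2) (q.1.1 ⊔ q.1.2)} :=
        (Measure.prod_apply measurableSet_mem_Ico_min_max).symm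
    _ = ∫⁻ t, μ.prod ν (Iic t ×ˢ Ioi t ∪ Ioi t ×ˢ Iic t) := by
        rw [Measure.prod_apply_symm measurableSet_mem_Ico_min_max]
        exact lintegral_congr fun t => congrArg (μ.prod ν) (setOf_mem_Ico_min_max t)
    _ = ∫⁻ t, μ (Iic t) * ν (Ioi t) + μ (Ioi t) * ν (Iic t) := by
        refine lintegral_congr fun t => ?_
        rw [measure_union (disjoint_prod.2 (Or.inl (Iic_disjoint_Ioi le_rfl)))
          (measurableSet_Ioi.prod measurableSet_Iic), Measure.prod_prod, Measure.prod_prod]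

/-- The probability that `t` separates independent `X ∼ μ` and `Y ∼ ν`. -/
noncomputable def separationProb (μ ν : Measure ℝ) (t : ℝ) : ℝ :=
  μ.real (Iic t) * ν.real (Ioi t) + μ.real (Ioi t) * ν.real (Iic t)

lemma separationProb_nonneg (μ ν : Measure ℝ) (t : ℝ) : 0 ≤ separationProb μ ν t := by
  unfold separationProb; positivity

section FiniteMeasure

variable {μ ν : Measure ℝ} [IsFiniteMeasure μ] [IsFiniteMeasure ν]

lemma measurable_separationProb : Measurable (separationProb μ ν) := by
  have hIic (ρ : Measure ℝ) [IsFiniteMeasure ρ] : Measurable fun t => ρ.real (Iic t) :=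
    Monotone.measurable fun _ _ h => measureReal_mono (Iic_subset_Iic.2 h)
  have hIoi (ρ : Measure ℝ) [IsFiniteMeasure ρ] : Measurable fun t => ρ.real (Ioi t) :=
    Antitone.measurable fun _ _ h => measureReal_mono (Ioi_subset_Ioi h)
  exact ((hIic μ).mul (hIoi ν)).add ((hIoi μ).mul (hIic ν))

lemma lintegral_ofReal_separationProb :
    ∫⁻ t, ENNReal.ofReal (separationProb μ ν t) =
      ∫⁻ p, ENNReal.ofReal |p.1 - p.2| ∂μ.prod ν := by
  rw [lintegral_ofReal_abs_sub_prod]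
  refine lintegral_congr fun t => ?_
  rw [separationProb, ENNReal.ofReal_add (by positivity) (by positivity),
    ENNReal.ofReal_mul measureReal_nonneg, ENNReal.ofReal_mul measureReal_nonneg,
    ofReal_measureReal, ofReal_measureReal, ofReal_measureReal, ofReal_measureReal]

theorem integral_abs_sub_prod :
    ∫ p, |p.1 - p.2| ∂μ.prod ν = ∫ t, separationProb μ ν t := by
  rw [integral_eq_lintegral_of_nonneg_ae (.of_forall fun _ => abs_nonneg _) (by fun_prop),
    integral_eq_lintegral_of_nonneg_ae (.of_forall (separationProb_nonneg μ ν))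
      measurable_separationProb.aestronglyMeasurable,
    lintegral_ofReal_separationProb]

theorem integrable_separationProb (h : Integrable (fun p : ℝ × ℝ => |p.1 - p.2|) (μ.prod ν)) :
    Integrable (separationProb μ ν) := by
  refine ⟨measurable_separationProb.aestronglyMeasurable, ?_⟩
  rw [hasFiniteIntegral_iff_ofReal (.of_forall (separationProb_nonneg μ ν)),
    lintegral_ofReal_separationProb]
  exact (hasFiniteIntegral_iff_ofReal (.of_forall fun _ => abs_nonneg _)).1 h.2

lemma integrable_abs_sub_prod (hμ : Integrable (fun x => |x|) μ)
    (hν : Integrable (fun x => |x|) ν) :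
    Integrable (fun p : ℝ × ℝ => |p.1 - p.2|) (μ.prod ν) := by
  have hμ' : Integrable id μ := (integrable_norm_iff (by fun_prop)).1 hμ
  have hν' : Integrable id ν := (integrable_norm_iff (by fun_prop)).1 hν
  exact ((hμ'.comp_fst ν).sub (hν'.comp_snd μ)).abs

end FiniteMeasure

lemma sq_sub_measureReal_Iic (μ ν : Measure ℝ) [IsProbabilityMeasure μ]
    [IsProbabilityMeasure ν] (t : ℝ) :
    (μ.real (Iic t) - ν.real (Iic t)) ^ 2 =
      separationProb μ ν t - separationProb μ μ t / 2 - separationProb ν ν t / 2 := by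
  simp only [separationProb, ← compl_Iic, probReal_compl_eq_one_sub measurableSet_Iic]
  ring

end EnergyDistance

open EnergyDistance

/-- For one-dimensional Borel probability measures with finite first moments,
the energy distance equals twice the integral of the squared difference of the
cumulative distribution functions (i.e. twice the CRPS). -/
theorem energy_distance_eq_two_crps
    (γ ω : Measure ℝ) [IsProbabilityMeasure γ] [IsProbabilityMeasure ω]
    (hγ : Integrable (fun x => |x|) γ) (hω : Integrable (fun x => |x|) ω) :
    2 * (∫ p : ℝ × ℝ, |p.1 - p.2| ∂(γ.prod ω)) -
      (∫ p : ℝ × ℝ, |p.1 - p.2| ∂(γ.prod γ)) -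
      (∫ p : ℝ × ℝ, |p.1 - p.2| ∂(ω.prod ω)) =
    2 * ∫ t : ℝ,
        ((γ (Set.Iic t)).toReal - (ω (Set.Iic t)).toReal) ^ 2 := by
  have hγω := integrable_separationProb (integrable_abs_sub_prod hγ hω)
  have hγγ := (integrable_separationProb (integrable_abs_sub_prod hγ hγ)).div_const 2
  have hωω := (integrable_separationProb (integrable_abs_sub_prod hω hω)).div_const 2
  simp only [integral_abs_sub_prod, ← measureReal_def, sq_sub_measureReal_Iic]
  rw [integral_sub ?_ hωω, integral_sub hγω hγγ, integral_div, integral_div]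
  · ring
  · exact hγω.sub hγγ
end

section
/- Let (X, σ, μ) be a measure space with σ-finite μ, p_ω a probability density with respect to μ which is strictly positive, and η = 1. For any probability densities p₁,...,p_N (w.r.t. μ) and weights w ∈ Δ_N, setting p̄ = ∑_n w_n p_n, one has exp(−KL(ω ‖ p̄)) ≥ ∑_n w_n exp(−KL(ω ‖ p_n)), i.e., KL divergence (as a loss in its second argument) is 1-exponentially concave, with the mixture as aggregated forecast. -/
/-!
Put `p̄ = ∑ₙ wₙ pₙ`. Since `KL(ω‖p̄) - KL(ω‖pₙ) = ∫ p_ω log (pₙ / p̄) dμ`, the claim reads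
`∑ₙ wₙ exp (∫ p_ω log (pₙ / p̄) dμ) ≤ 1`. Jensen's inequality for `exp` under the probability
measure `p_ω μ` bounds the `n`-th term by `∫ p_ω wₙ pₙ / p̄ dμ`, and these bounds add up to
`∫ p_ω dμ = 1` because the shares `wₙ pₙ / p̄` sum to `1` pointwise.
-/

open MeasureTheory Real Finset

section

variable {ι : Type*} [Fintype ι] {w : ι → ℝ}

theorem sum_mul_pos_of_sum_eq_one (hw : ∀ i, 0 ≤ w i) (hw1 : ∑ i, w i = 1) {a : ι → ℝ}
    (ha : ∀ i, 0 < a i) : 0 < ∑ i, w i * a i := by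
  obtain ⟨i, -, hi⟩ := exists_ne_zero_of_sum_ne_zero (hw1 ▸ one_ne_zero : ∑ i, w i ≠ 0)
  exact sum_pos' (fun j _ => mul_nonneg (hw j) (ha j).le)
    ⟨i, mem_univ i, mul_pos ((hw i).lt_of_ne' hi) (ha i)⟩

end

namespace MeasureTheory

variable {X : Type*} [MeasurableSpace X] {μ : Measure X} {ρ : X → ℝ}

theorem integral_withDensity_ofReal (hρ : AEMeasurable ρ μ) (hρ0 : 0 ≤ᵐ[μ] ρ) (g : X → ℝ) :
    ∫ x, g x ∂μ.withDensity (fun x => ENNReal.ofReal (ρ x)) = ∫ x, ρ x * g x ∂μ := by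
  rw [integral_withDensity_eq_integral_toReal_smul₀ hρ.ennreal_ofReal
    (ae_of_all _ fun _ => ENNReal.ofReal_lt_top)]
  refine integral_congr_ae ?_
  filter_upwards [hρ0] with x hx
  simp [ENNReal.toReal_ofReal hx]

theorem integrable_withDensity_ofReal_iff (hρ : AEMeasurable ρ μ) (hρ0 : 0 ≤ᵐ[μ] ρ)
    {g : X → ℝ} :
    Integrable g (μ.withDensity fun x => ENNReal.ofReal (ρ x)) ↔
      Integrable (fun x => ρ x * g x) μ := by
  rw [integrable_withDensity_iff_integrable_smul₀' hρ.ennreal_ofReal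
    (ae_of_all _ fun _ => ENNReal.ofReal_lt_top)]
  refine integrable_congr ?_
  filter_upwards [hρ0] with x hx
  simp [ENNReal.toReal_ofReal hx]

theorem isProbabilityMeasure_withDensity_ofReal (hρ0 : 0 ≤ᵐ[μ] ρ) (hρ1 : ∫ x, ρ x ∂μ = 1) :
    IsProbabilityMeasure (μ.withDensity fun x => ENNReal.ofReal (ρ x)) := by
  constructor
  rw [withDensity_apply _ MeasurableSet.univ, setLIntegral_univ,
    ← ofReal_integral_eq_lintegral_ofReal (.of_integral_ne_zero (by simp [hρ1])) hρ0, hρ1,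
    ENNReal.ofReal_one]

theorem exp_integral_mul_log_le_integral_mul (hρ : AEMeasurable ρ μ) (hρ0 : 0 ≤ᵐ[μ] ρ)
    (hρ1 : ∫ x, ρ x ∂μ = 1) {r : X → ℝ} (hr : ∀ x, 0 < r x)
    (hlog : Integrable (fun x => ρ x * log (r x)) μ) (hint : Integrable (fun x => ρ x * r x) μ) :
    exp (∫ x, ρ x * log (r x) ∂μ) ≤ ∫ x, ρ x * r x ∂μ := by
  have := isProbabilityMeasure_withDensity_ofReal hρ0 hρ1
  have hexp_log : exp ∘ (fun x => log (r x)) = r := funext fun x => exp_log (hr x)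
  have h := convexOn_exp.map_integral_le (μ := μ.withDensity fun x => ENNReal.ofReal (ρ x))
    continuous_exp.continuousOn isClosed_univ (ae_of_all _ fun _ => Set.mem_univ _)
    ((integrable_withDensity_ofReal_iff hρ hρ0).2 hlog)
    (by rwa [hexp_log, integrable_withDensity_ofReal_iff hρ hρ0])
  simpa only [exp_log (hr _), integral_withDensity_ofReal hρ hρ0] using h

section Mixture

variable {ι : Type*} [Fintype ι] {w : ι → ℝ}

theorem sum_mul_exp_integral_mul_log_div_mixture_le_one (hρ : AEMeasurable ρ μ)
    (hρ0 : 0 ≤ᵐ[μ] ρ) (hρ1 : ∫ x, ρ x ∂μ = 1) (hw : ∀ i, 0 ≤ w i) (hw1 : ∑ i, w i = 1)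
    {p : ι → X → ℝ} (hp_meas : ∀ i, AEMeasurable (p i) μ) (hp : ∀ i x, 0 < p i x)
    (hlog : ∀ i, Integrable (fun x => ρ x * log (p i x / ∑ j, w j * p j x)) μ) :
    ∑ i, w i * exp (∫ x, ρ x * log (p i x / ∑ j, w j * p j x) ∂μ) ≤ 1 := by
  set pbar : X → ℝ := fun x => ∑ j, w j * p j x
  have hpbar : ∀ x, 0 < pbar x := fun x => sum_mul_pos_of_sum_eq_one hw hw1 (hp · x)
  have hshare : ∀ i x, 0 ≤ w i * (p i x / pbar x) ∧ w i * (p i x / pbar x) ≤ 1 := by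
    intro i x
    refine ⟨mul_nonneg (hw i) (div_pos (hp i x) (hpbar x)).le, ?_⟩
    rw [← mul_div_assoc, div_le_one (hpbar x)]
    exact single_le_sum (fun j _ => mul_nonneg (hw j) (hp j x).le) (mem_univ i)
  have hρ_int : Integrable ρ μ := .of_integral_ne_zero (by simp [hρ1])
  have hshare_int : ∀ i, Integrable (fun x => ρ x * (w i * (p i x / pbar x))) μ := by
    intro i
    refine hρ_int.mono' ?_ ?_
    · fun_prop
    · filter_upwards [hρ0] with x hx
      rw [norm_of_nonneg (mul_nonneg hx (hshare i x).1)]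
      exact mul_le_of_le_one_right hx (hshare i x).2
  have hterm : ∀ i, w i * exp (∫ x, ρ x * log (p i x / pbar x) ∂μ) ≤
      ∫ x, ρ x * (w i * (p i x / pbar x)) ∂μ := by
    intro i
    rcases (hw i).eq_or_lt with h0 | hpos
    · simp [← h0]
    have hint : Integrable (fun x => ρ x * (p i x / pbar x)) μ := by
      simpa [mul_left_comm _ (w i), mul_assoc, hpos.ne'] using (hshare_int i).const_mul (w i)⁻¹
    calc w i * exp (∫ x, ρ x * log (p i x / pbar x) ∂μ)
        ≤ w i * ∫ x, ρ x * (p i x / pbar x) ∂μ := by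
          gcongr
          exact exp_integral_mul_log_le_integral_mul hρ hρ0 hρ1
            (fun x => div_pos (hp i x) (hpbar x)) (hlog i) hint
      _ = ∫ x, ρ x * (w i * (p i x / pbar x)) ∂μ := by
          rw [← integral_const_mul]
          congr 1 with x
          ring
  have hpartition : ∀ x, ∑ i, ρ x * (w i * (p i x / pbar x)) = ρ x := by
    intro x
    rw [← mul_sum]
    simp_rw [mul_div_assoc']
    rw [← sum_div, div_self (hpbar x).ne', mul_one]
  calc ∑ i, w i * exp (∫ x, ρ x * log (p i x / pbar x) ∂μ)
      ≤ ∑ i, ∫ x, ρ x * (w i * (p i x / pbar x)) ∂μ := sum_le_sum fun i _ => hterm i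
    _ = 1 := by
      rw [← integral_finsetSum _ fun i _ => hshare_int i]
      simp only [hpartition, hρ1]

end Mixture

end MeasureTheory

theorem kl_one_exp_concave_general
    {X : Type*} [MeasurableSpace X] (μ : Measure X)
    (pω : X → ℝ) (hpω_meas : Measurable pω)
    (hpω_pos : ∀ x, 0 < pω x) (hpω_int : ∫ x, pω x ∂μ = 1)
    (N : ℕ) (w : Fin N → ℝ) (hw_nonneg : ∀ n, 0 ≤ w n) (hw_sum : ∑ n, w n = 1)
    (p : Fin N → X → ℝ) (hp_meas : ∀ n, Measurable (p n))
    (hp_pos : ∀ n x, 0 < p n x)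
    (hKL_int : ∀ n, Integrable (fun x => pω x * Real.log (pω x / p n x)) μ)
    (hKLbar_int : Integrable
      (fun x => pω x * Real.log (pω x / ∑ n, w n * p n x)) μ) :
    ∑ n, w n * Real.exp (-(∫ x, pω x * Real.log (pω x / p n x) ∂μ)) ≤
      Real.exp (-(∫ x, pω x * Real.log (pω x / ∑ n, w n * p n x) ∂μ)) := by
  set pbar : X → ℝ := fun x => ∑ n, w n * p n x
  set KLbar := ∫ x, pω x * log (pω x / pbar x) ∂μ
  have hpbar : ∀ x, 0 < pbar x := fun x =>
    sum_mul_pos_of_sum_eq_one hw_nonneg hw_sum (hp_pos · x)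
  have hsplit : ∀ n, (fun x => pω x * log (p n x / pbar x)) =
      fun x => pω x * log (pω x / pbar x) - pω x * log (pω x / p n x) :=
    fun n => funext fun x => by
      rw [← mul_sub, ← log_div (div_pos (hpω_pos x) (hpbar x)).ne'
        (div_pos (hpω_pos x) (hp_pos n x)).ne', div_div_div_cancel_left' _ _ (hpω_pos x).ne']
  have hlog_int : ∀ n, Integrable (fun x => pω x * log (p n x / pbar x)) μ := fun n => by
    rw [hsplit]
    exact hKLbar_int.sub (hKL_int n)
  have hKL : ∀ n, ∫ x, pω x * log (pω x / p n x) ∂μ =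
      KLbar - ∫ x, pω x * log (p n x / pbar x) ∂μ := fun n => by
    rw [hsplit, integral_sub hKLbar_int (hKL_int n), sub_sub_cancel]
  have hpω_nonneg : 0 ≤ᵐ[μ] pω := ae_of_all _ fun x => (hpω_pos x).le
  calc ∑ n, w n * exp (-∫ x, pω x * log (pω x / p n x) ∂μ)
      = (∑ n, w n * exp (∫ x, pω x * log (p n x / pbar x) ∂μ)) * exp (-KLbar) := by
        simp_rw [hKL, sum_mul, neg_sub, sub_eq_add_neg, exp_add, mul_assoc]
    _ ≤ 1 * exp (-KLbar) := by
        gcongr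
        exact sum_mul_exp_integral_mul_log_div_mixture_le_one hpω_meas.aemeasurable hpω_nonneg
          hpω_int hw_nonneg hw_sum (fun n => (hp_meas n).aemeasurable) hp_pos hlog_int
    _ = exp (-KLbar) := one_mul _

/-- KL divergence (as a loss in its second argument) is `1`-exponentially
concave: aggregating densities by their mixture satisfies the
exp-concavity inequality. -/
theorem kl_one_exp_concave
    {X : Type*} [MeasurableSpace X] (μ : Measure X) [SigmaFinite μ]
    (pω : X → ℝ) (hpω_meas : Measurable pω)
    (hpω_pos : ∀ x, 0 < pω x) (hpω_int : ∫ x, pω x ∂μ = 1)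
    (N : ℕ) (w : Fin N → ℝ) (hw_nonneg : ∀ n, 0 ≤ w n) (hw_sum : ∑ n, w n = 1)
    (p : Fin N → X → ℝ) (hp_meas : ∀ n, Measurable (p n))
    (hp_pos : ∀ n x, 0 < p n x) (hp_int : ∀ n, ∫ x, p n x ∂μ = 1)
    (hKL_int : ∀ n, Integrable (fun x => pω x * Real.log (pω x / p n x)) μ)
    (hKLbar_int : Integrable
      (fun x => pω x * Real.log (pω x / ∑ n, w n * p n x)) μ) :
    ∑ n, w n * Real.exp (-(∫ x, pω x * Real.log (pω x / p n x) ∂μ)) ≤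
      Real.exp (-(∫ x, pω x * Real.log (pω x / ∑ n, w n * p n x) ∂μ)) :=
  kl_one_exp_concave_general μ pω hpω_meas hpω_pos hpω_int N w hw_nonneg hw_sum p hp_meas hp_pos
    hKL_int hKLbar_int
end

section
/- The complex squared loss λ(z, z') = |z − z'|² on the closed unit disk {z ∈ ℂ : |z| ≤ 1} is 1/8-exponentially concave in the first argument: for each fixed z' with |z'| ≤ 1, the function z ↦ exp(−|z − z'|²/8) is concave on the unit disk (viewed as a subset of ℝ²). -/
/-!
Concavity can be checked along segments. On the segment `t ↦ x + t • v`, the function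
`φ t = exp (-(c * ‖x + t • v - p‖ ^ 2))` has
`φ'' = φ * ((2 c ⟪u, v⟫) ^ 2 - 2 c ‖v‖ ^ 2)` with `u = x + t • v - p`, and by Cauchy–Schwarz this
is nonpositive as soon as `2 c ‖u‖ ^ 2 ≤ 1`. For `c = 1/8` that means `‖z - z'‖ ≤ 2`, which holds
for any two points of the unit disk.
-/

open Real Set
open scoped RealInnerProductSpace

section

variable {E : Type*}

theorem concaveOn_of_forall_concaveOn_segment {β : Type*} [AddCommGroup E] [Module ℝ E]
    [AddCommMonoid β] [PartialOrder β] [SMul ℝ β] {s : Set E} (hs : Convex ℝ s) {f : E → β}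
    (h : ∀ x ∈ s, ∀ y ∈ s, ConcaveOn ℝ (Icc 0 1) fun t : ℝ => f (x + t • (y - x))) :
    ConcaveOn ℝ s f := by
  refine ⟨hs, fun x hx y hy a b ha hb hab => ?_⟩
  have hseg := (h x hx y hy).2 (left_mem_Icc.2 zero_le_one) (right_mem_Icc.2 zero_le_one)
    ha hb hab
  have hpoint : x + b • (y - x) = a • x + b • y := by
    rw [eq_sub_of_add_eq' hab]
    module
  simpa [hpoint] using hseg

variable [NormedAddCommGroup E] [InnerProductSpace ℝ E]

theorem concaveOn_exp_neg_mul_norm_add_smul_sub_sq {D : Set ℝ} (hD : Convex ℝ D) {c : ℝ}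
    (hc : 0 ≤ c) (x v p : E) (h : ∀ t ∈ D, 2 * c * ‖x + t • v - p‖ ^ 2 ≤ 1) :
    ConcaveOn ℝ D fun t => exp (-(c * ‖x + t • v - p‖ ^ 2)) := by
  set u : ℝ → E := fun t => x + t • v - p
  have hu : ∀ t, HasDerivAt u v t := fun t =>
    ((((hasDerivAt_id t).smul_const v).const_add x).sub_const p).congr_deriv (one_smul ℝ v)
  refine concaveOn_of_hasDerivWithinAt2_nonpos hD (by fun_prop)
    (f' := fun t => exp (-(c * ‖u t‖ ^ 2)) * -(c * (2 * ⟪u t, v⟫)))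
    (f'' := fun t => exp (-(c * ‖u t‖ ^ 2)) * ((c * (2 * ⟪u t, v⟫)) ^ 2 - 2 * c * ‖v‖ ^ 2))
    (fun t _ => ?_) (fun t _ => ?_) (fun t ht => ?_)
  · exact (((hu t).norm_sq.const_mul c).neg.exp).hasDerivWithinAt
  · have hinner : HasDerivAt (fun t => ⟪u t, v⟫) (‖v‖ ^ 2) t := by
      simpa [real_inner_self_eq_norm_sq] using (hu t).inner ℝ (hasDerivAt_const t v)
    exact ((((hu t).norm_sq.const_mul c).neg.exp.mul ((hinner.const_mul 2).const_mul c).neg)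
      |>.congr_deriv (by simp only [Pi.neg_apply]; ring)).hasDerivWithinAt
  · have hcs : ⟪u t, v⟫ ^ 2 ≤ ‖u t‖ ^ 2 * ‖v‖ ^ 2 := by
      rw [← mul_pow, ← sq_abs]
      exact pow_le_pow_left₀ (abs_nonneg _) (abs_real_inner_le_norm _ _) 2
    have hut : 2 * c * ‖u t‖ ^ 2 ≤ 1 := h t (interior_subset ht)
    refine mul_nonpos_of_nonneg_of_nonpos (exp_pos _).le ?_
    nlinarith [mul_le_mul_of_nonneg_left hcs (mul_nonneg hc hc),
      mul_le_mul_of_nonneg_left hut (by positivity : 0 ≤ 2 * c * ‖v‖ ^ 2)]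

theorem concaveOn_exp_neg_mul_norm_sub_sq {s : Set E} (hs : Convex ℝ s) {c : ℝ} (hc : 0 ≤ c)
    (p : E) (h : ∀ x ∈ s, 2 * c * ‖x - p‖ ^ 2 ≤ 1) :
    ConcaveOn ℝ s fun x => exp (-(c * ‖x - p‖ ^ 2)) :=
  concaveOn_of_forall_concaveOn_segment hs fun x hx y hy =>
    concaveOn_exp_neg_mul_norm_add_smul_sub_sq (convex_Icc 0 1) hc x (y - x) p
      fun _ ht => h _ (hs.add_smul_sub_mem hx hy ht)

end

/-- The complex squared loss `|z - z'|²` on the closed unit disk is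
`1/8`-exponentially concave in its first argument. -/
theorem complex_squared_loss_exp_concave
    (z' : ℂ) (hz' : ‖z'‖ ≤ 1) :
    ConcaveOn ℝ (Metric.closedBall (0 : ℂ) 1)
      (fun z => Real.exp (-(‖z - z'‖ ^ 2 / 8))) := by
  have hdist : ∀ z ∈ Metric.closedBall (0 : ℂ) 1, 2 * 8⁻¹ * ‖z - z'‖ ^ 2 ≤ 1 := by
    intro z hz
    have hz : ‖z‖ ≤ 1 := by simpa using hz
    have hle : ‖z - z'‖ ≤ 2 := (norm_sub_le z z').trans (by linarith)
    nlinarith [norm_nonneg (z - z')]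
  simp_rw [div_eq_inv_mul]
  exact concaveOn_exp_neg_mul_norm_sub_sq (convex_closedBall 0 1) (by norm_num) z' hdist
end
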